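/- arXiv:2408.16985 — 4 statements merged into one kernel-verified Lean document; each statement's English description precedes it below -/
import Mathlib

section
/- ODE comparison lemma: let f be a nonnegative measurable function on (0,T) satisfying ∞ > f(t) ≥ a₁ + a₂ ∫_{t_*}^t s^{-a} f(s)^b ds for almost all t ∈ (t_*, T), where a₁, a₂ > 0, a ≥ 0, b > 1, and t_* ∈ (0, T/2). Then there exists C = C(a,b) > 0 such that a₁ ≤ C a₂^{-1/(b-1)} t_*^{(a-1)/(b-1)}. -/
open MeasureTheory Set

noncomputable section

abbrev E (N : ℕ) := EuclideanSpace ℝ (Fin N)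
/-- The Heisenberg group `ℍ^N` as a set: `ℝ^N × ℝ^N × ℝ`. -/
abbrev H (N : ℕ) := E N × E N × ℝ

/-- Heisenberg group law. -/
def hmul {N : ℕ} (a b : H N) : H N :=
  (a.1 + b.1, a.2.1 + b.2.1,
    a.2.2 + b.2.2 + 2 * ((inner ℝ a.1 b.2.1 : ℝ) - (inner ℝ b.1 a.2.1 : ℝ)))

/-- Homogeneous Heisenberg norm. -/
def hnorm {N : ℕ} (a : H N) : ℝ :=
  ((‖a.1‖ ^ 2 + ‖a.2.1‖ ^ 2) ^ 2 + a.2.2 ^ 2) ^ (1/4 : ℝ)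

/-- Left-invariant distance `d_ℍ(η,ζ) = |ζ⁻¹ ∘ η|`. -/
def hdist {N : ℕ} (a b : H N) : ℝ := hnorm (hmul (-b) a)

/-- Metric ball. -/
def hball {N : ℕ} (a : H N) (r : ℝ) : Set (H N) := {b | hdist b a < r}

/-- Parabolic dilation. -/
def dil {N : ℕ} (l : ℝ) (a : H N) : H N := (l • a.1, l • a.2.1, l ^ 2 * a.2.2)

/-!
If `a₁` is large, the inequality bootstraps. A lower bound `f ≥ c` beyond `τ`, fed into the
integral over a slab `(τ, τ']`, gives `f ≥ a₂ w c^b (τ' - τ)` beyond `τ'`, where `w = (2t₀)^(-a)`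
bounds the weight `s^(-a)` from below on `(t₀, 2t₀]`. Along `τₙ = 2t₀ - t₀/2ⁿ` the bounds
`cₙ = a₁ lⁿ` with `l^(b-1) = 2` propagate as soon as `2l ≤ a₂ w t₀ a₁^(b-1)`, and then `f` would
be infinite on `(2t₀, T)`. Hence `a₂ (2t₀)^(-a) t₀ a₁^(b-1) < 2l`, which is the claim after taking
`(b-1)`-th roots.
-/

theorem mul_pow_succ_le_mul_rpow_div {x K l b : ℝ} (hx : 0 < x) (hl : 0 < l)
    (hlb : l ^ (b - 1) = 2) (hK : 2 * l ≤ K * x ^ (b - 1)) (n : ℕ) :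
    x * l ^ (n + 1) ≤ K * (x * l ^ n) ^ b / 2 ^ (n + 1) := by
  have hpow : (x * l ^ n) ^ b = x ^ (b - 1) * 2 ^ n * (x * l ^ n) := by
    conv_lhs => rw [← sub_add_cancel b 1]
    rw [Real.rpow_add_one (by positivity), Real.mul_rpow hx.le (by positivity),
      ← Real.rpow_pow_comm hl.le, hlb]
  rw [hpow, le_div_iff₀ (by positivity)]
  calc x * l ^ (n + 1) * 2 ^ (n + 1) = 2 * l * (x * l ^ n * 2 ^ n) := by ring
    _ ≤ K * x ^ (b - 1) * (x * l ^ n * 2 ^ n) := by gcongr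
    _ = K * (x ^ (b - 1) * 2 ^ n * (x * l ^ n)) := by ring

def IsIntegralSupersolution (g : ℝ → ℝ) (b a₁ a₂ t₀ T : ℝ) (f : ℝ → ℝ) : Prop :=
  ∀ᵐ t ∂volume.restrict (Ioo t₀ T),
    IntegrableOn (fun s => g s * f s ^ b) (Ioc t₀ t) ∧
      a₁ + a₂ * ∫ s in Ioc t₀ t, g s * f s ^ b ≤ f t

namespace IsIntegralSupersolution

variable {f g : ℝ → ℝ} {b a₁ a₂ t₀ T : ℝ}

theorem ae_lowerBound_step (hf : IsIntegralSupersolution g b a₁ a₂ t₀ T f) (ha₂ : 0 ≤ a₂)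
    (hb : 0 ≤ b) (hf0 : ∀ s ∈ Ioo t₀ T, 0 ≤ f s) (hg0 : ∀ s ∈ Ioo t₀ T, 0 ≤ g s)
    {τ τ' c w : ℝ} (hτ : t₀ ≤ τ) (hττ' : τ ≤ τ') (hτ' : τ' < T) (hc : 0 ≤ c)
    (hw : ∀ s ∈ Ioc τ τ', w ≤ g s)
    (hlow : ∀ᵐ t ∂volume.restrict (Ioo t₀ T), τ < t → c ≤ f t) :
    ∀ᵐ t ∂volume.restrict (Ioo t₀ T), τ' < t → a₁ + a₂ * (w * c ^ b * (τ' - τ)) ≤ f t := by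
  have hslab : Ioc τ τ' ⊆ Ioo t₀ T := fun s hs => ⟨hτ.trans_lt hs.1, hs.2.trans_lt hτ'⟩
  have hslab_le : ∀ᵐ s ∂volume.restrict (Ioc τ τ'), w * c ^ b ≤ g s * f s ^ b := by
    filter_upwards [ae_restrict_of_ae_restrict_of_subset hslab hlow,
      ae_restrict_mem measurableSet_Ioc] with s hs hmem
    exact mul_le_mul (hw s hmem) (Real.rpow_le_rpow hc (hs hmem.1) hb) (by positivity)
      (hg0 s (hslab hmem))
  filter_upwards [hf, ae_restrict_mem measurableSet_Ioo] with t ⟨hint, hle⟩ ht hτ't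
  have hsub : Ioc τ τ' ⊆ Ioc t₀ t := Ioc_subset_Ioc hτ hτ't.le
  have hnonneg : 0 ≤ᵐ[volume.restrict (Ioc t₀ t)] fun s => g s * f s ^ b := by
    filter_upwards [ae_restrict_mem measurableSet_Ioc] with s ⟨hs₁, hs₂⟩
    have hs : s ∈ Ioo t₀ T := ⟨hs₁, hs₂.trans_lt ht.2⟩
    exact mul_nonneg (hg0 s hs) (Real.rpow_nonneg (hf0 s hs) b)
  have hint_lower : w * c ^ b * (τ' - τ) ≤ ∫ s in Ioc t₀ t, g s * f s ^ b :=
    calc w * c ^ b * (τ' - τ) = ∫ _ in Ioc τ τ', w * c ^ b := by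
          rw [setIntegral_const, Real.volume_real_Ioc_of_le hττ', smul_eq_mul, mul_comm]
      _ ≤ ∫ s in Ioc τ τ', g s * f s ^ b :=
          setIntegral_mono_ae_restrict (integrableOn_const measure_Ioc_lt_top.ne)
            (hint.mono_set hsub) hslab_le
      _ ≤ ∫ s in Ioc t₀ t, g s * f s ^ b := setIntegral_mono_set hint hnonneg hsub.eventuallyLE
  linarith [mul_le_mul_of_nonneg_left hint_lower ha₂]

theorem ae_geometric_lowerBound (hf : IsIntegralSupersolution g b a₁ a₂ t₀ T f) (ha₁ : 0 < a₁)
    (ha₂ : 0 ≤ a₂) (hb : 0 ≤ b) (hf0 : ∀ s ∈ Ioo t₀ T, 0 ≤ f s)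
    (hg0 : ∀ s ∈ Ioo t₀ T, 0 ≤ g s) (ht₀ : 0 ≤ t₀) (hT : 2 * t₀ < T) {w l : ℝ}
    (hw : ∀ s ∈ Ioc t₀ (2 * t₀), w ≤ g s) (hl : 0 < l) (hlb : l ^ (b - 1) = 2)
    (hlarge : 2 * l ≤ a₂ * w * t₀ * a₁ ^ (b - 1)) (n : ℕ) :
    ∀ᵐ t ∂volume.restrict (Ioo t₀ T), 2 * t₀ - t₀ / 2 ^ n < t → a₁ * l ^ n ≤ f t := by
  have hτ_ge (n : ℕ) : t₀ ≤ 2 * t₀ - t₀ / 2 ^ n := by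
    linarith [div_le_self ht₀ (one_le_pow₀ one_le_two : (1 : ℝ) ≤ 2 ^ n)]
  have hτ_le (n : ℕ) : 2 * t₀ - t₀ / 2 ^ n ≤ 2 * t₀ := by
    linarith [div_nonneg ht₀ (pow_nonneg zero_le_two n : (0 : ℝ) ≤ 2 ^ n)]
  have hτ_succ (n : ℕ) :
      2 * t₀ - t₀ / 2 ^ (n + 1) - (2 * t₀ - t₀ / 2 ^ n) = t₀ / 2 ^ (n + 1) := by
    rw [pow_succ]; field_simp; ring
  induction n with
  | zero =>
    -- the step lemma across the empty slab `(t₀, t₀]`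
    have hnonneg : ∀ᵐ t ∂volume.restrict (Ioo t₀ T), t₀ < t → (0 : ℝ) ≤ f t := by
      filter_upwards [ae_restrict_mem measurableSet_Ioo] with t ht _ using hf0 t ht
    have := hf.ae_lowerBound_step ha₂ hb hf0 hg0 le_rfl le_rfl (by linarith) le_rfl
      (w := 0) (by simp) hnonneg
    simpa [two_mul] using this
  | succ n ih =>
    have hstep := hf.ae_lowerBound_step ha₂ hb hf0 hg0 (hτ_ge n)
      (by linarith [hτ_succ n, div_nonneg ht₀ (pow_nonneg zero_le_two (n + 1) : (0 : ℝ) ≤ _)])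
      ((hτ_le (n + 1)).trans_lt hT) (by positivity)
      (fun s hs => hw s ⟨(hτ_ge n).trans_lt hs.1, hs.2.trans (hτ_le (n + 1))⟩) ih
    filter_upwards [hstep] with t ht hτt
    have := mul_pow_succ_le_mul_rpow_div ha₁ hl hlb hlarge n
    rw [hτ_succ] at ht
    calc a₁ * l ^ (n + 1) ≤ a₂ * w * t₀ * (a₁ * l ^ n) ^ b / 2 ^ (n + 1) := this
      _ = a₂ * (w * (a₁ * l ^ n) ^ b * (t₀ / 2 ^ (n + 1))) := by ring
      _ ≤ f t := by linarith [ht hτt]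

theorem mul_rpow_lt (hf : IsIntegralSupersolution g b a₁ a₂ t₀ T f) (ha₁ : 0 < a₁)
    (ha₂ : 0 ≤ a₂) (hb : 1 < b) (hf0 : ∀ s ∈ Ioo t₀ T, 0 ≤ f s)
    (hg0 : ∀ s ∈ Ioo t₀ T, 0 ≤ g s) (ht₀ : 0 ≤ t₀) (hT : 2 * t₀ < T) {w : ℝ}
    (hw : ∀ s ∈ Ioc t₀ (2 * t₀), w ≤ g s) :
    a₂ * w * t₀ * a₁ ^ (b - 1) < 2 * 2 ^ (1 / (b - 1)) := by
  set l : ℝ := 2 ^ (1 / (b - 1))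
  have hl : 1 < l := Real.one_lt_rpow one_lt_two (by bound)
  have hlb : l ^ (b - 1) = 2 := by
    rw [← Real.rpow_mul zero_le_two, one_div_mul_cancel (by linarith), Real.rpow_one]
  by_contra! hlarge
  have hbounds := ae_all_iff.2
    (hf.ae_geometric_lowerBound ha₁ ha₂ (by linarith) hf0 hg0 ht₀ hT hw (by linarith) hlb hlarge)
  have : (ae (volume.restrict (Ioo (2 * t₀) T))).NeBot := ae_neBot.2 (by simp [hT])
  obtain ⟨t, hft, ht⟩ := ((ae_restrict_of_ae_restrict_of_subset
    (Ioo_subset_Ioo_left (by linarith : t₀ ≤ 2 * t₀)) hbounds).and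
    (ae_restrict_mem measurableSet_Ioo)).exists
  obtain ⟨n, hn⟩ := pow_unbounded_of_one_lt (f t / a₁) hl
  have hfn := hft n
    (by linarith [ht.1, div_nonneg ht₀ (pow_nonneg zero_le_two n : (0 : ℝ) ≤ 2 ^ n)])
  rw [div_lt_iff₀ ha₁] at hn
  linarith

end IsIntegralSupersolution

theorem le_mul_rpow_of_mul_rpow_lt {a p a₁ a₂ t₀ D : ℝ} (hp : 0 < p) (ha₁ : 0 < a₁)
    (ha₂ : 0 < a₂) (ht₀ : 0 < t₀) (hD : 0 ≤ D) (h : a₂ * (2 * t₀) ^ (-a) * t₀ * a₁ ^ p < D) :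
    a₁ ≤ (2 ^ a * D) ^ (1 / p) * a₂ ^ (-1 / p) * t₀ ^ ((a - 1) / p) := by
  rw [← Real.rpow_le_rpow_iff ha₁.le (by positivity) hp,
    Real.mul_rpow (by positivity) (by positivity), Real.mul_rpow (by positivity) (by positivity),
    ← Real.rpow_mul (by positivity), ← Real.rpow_mul ha₂.le, ← Real.rpow_mul ht₀.le,
    div_mul_cancel₀ _ hp.ne', div_mul_cancel₀ _ hp.ne', div_mul_cancel₀ _ hp.ne', Real.rpow_one,
    Real.rpow_neg_one, Real.rpow_sub_one ht₀.ne']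
  rw [Real.rpow_neg (by positivity), Real.mul_rpow zero_le_two ht₀.le] at h
  have hrhs : 2 ^ a * D * a₂⁻¹ * (t₀ ^ a / t₀) = D / (a₂ * (2 ^ a * t₀ ^ a)⁻¹ * t₀) := by
    field_simp
  rw [hrhs, le_div_iff₀ (by positivity)]
  linarith

/-- ODE comparison lemma: if `f(t) ≥ a₁ + a₂ ∫_{t₀}^t s^{-a} f(s)^b ds` a.e. on
`(t₀,T)` with `t₀ ∈ (0,T/2)`, then `a₁ ≤ C a₂^{-1/(b-1)} t₀^{(a-1)/(b-1)}` with
`C = C(a,b)`. -/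
theorem stmt_11 (a b : ℝ) (ha : 0 ≤ a) (hb : 1 < b) :
    ∃ C : ℝ, 0 < C ∧ ∀ (T a₁ a₂ t₀ : ℝ) (f : ℝ → ℝ),
      0 < T → 0 < a₁ → 0 < a₂ → 0 < t₀ → t₀ < T / 2 →
      Measurable f → (∀ t ∈ Set.Ioo (0 : ℝ) T, 0 ≤ f t) →
      (∀ᵐ t ∂(volume.restrict (Set.Ioo t₀ T)),
        IntegrableOn (fun s => s ^ (-a) * f s ^ b) (Set.Ioc t₀ t) ∧
        a₁ + a₂ * ∫ s in Set.Ioc t₀ t, s ^ (-a) * f s ^ b ≤ f t) →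
      a₁ ≤ C * a₂ ^ (-(1 : ℝ) / (b - 1)) * t₀ ^ ((a - 1) / (b - 1)) := by
  refine ⟨(2 ^ a * (2 * 2 ^ (1 / (b - 1)))) ^ (1 / (b - 1)), by positivity, ?_⟩
  intro T a₁ a₂ t₀ f _ ha₁ ha₂ ht₀ ht₀T _ hf0 hf
  have hweight : ∀ s ∈ Ioc t₀ (2 * t₀), (2 * t₀) ^ (-a) ≤ s ^ (-a) := fun s hs =>
    Real.rpow_le_rpow_of_nonpos (ht₀.trans hs.1) hs.2 (neg_nonpos.2 ha)
  have hweight_nonneg : ∀ s ∈ Ioo t₀ T, 0 ≤ s ^ (-a) := fun s hs =>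
    Real.rpow_nonneg (ht₀.le.trans hs.1.le) _
  have hblowup := IsIntegralSupersolution.mul_rpow_lt hf ha₁ ha₂.le hb
    (fun s hs => hf0 s ⟨ht₀.trans hs.1, hs.2⟩) hweight_nonneg ht₀.le (by linarith) hweight
  exact le_mul_rpow_of_mul_rpow_lt (by linarith) ha₁ ha₂ ht₀ (by positivity) hblowup
end
end

section
/- ODE comparison lemma, logarithmic case: let f be a nonnegative measurable function on (0,T) with ∞ > f(t) ≥ a₁ + a₂ ∫_{t_*}^t s^{-1} f(s)^b ds for a.a. t ∈ (t_*, T), where a₁, a₂ > 0, b > 1, and t_* ∈ (0, T/2). Then a₁ ≤ (a₂(b−1))^{-1/(b-1)} [log(T/(2t_*))]^{-1/(b-1)}. -/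
/-!
Put `u t = a₁ + a₂ ∫_{(t₀, t]} s⁻¹ f(s)^b`. The hypothesis says `f ≥ u` a.e., so formally
`u' ≥ a₂ u^b / t`, i.e. `t ↦ a₂ (b - 1) log t + u(t)^(1 - b)` is nonincreasing; evaluated between
`t₀` and a point `t₁ ∈ (T/2, T)` where the hypothesis holds, this gives
`a₂ (b - 1) log (T / (2 t₀)) ≤ a₁^(1 - b)`. As `u` is merely continuous, the
monotonicity is proved through right Dini derivatives, using `u z - u x ≥ a₂ u(x)^b (z - x) / z`
in place of the differential inequality.
-/

open MeasureTheory Set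

noncomputable section

open Filter Topology Real

/- The tangent-line inequality at `v` for the convex function `x ↦ x ^ (1 - b)`. -/
theorem sub_one_mul_rpow_neg_mul_sub_le {b u v : ℝ} (hb : 1 ≤ b) (hu : 0 < u) (huv : u ≤ v) :
    (b - 1) * v ^ (-b) * (v - u) ≤ u ^ (1 - b) - v ^ (1 - b) := by
  have key := (convex_Icc u v).mul_sub_le_image_sub_of_le_deriv (f := fun y => -y ^ (1 - b))
    (C := (b - 1) * v ^ (-b))
    (fun x hx =>
      (continuousAt_id.rpow_const (Or.inl (hu.trans_le hx.1).ne')).neg.continuousWithinAt)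
    ?_ ?_ u ⟨le_rfl, huv⟩ v ⟨huv, le_rfl⟩ huv
  · linarith
  · rw [interior_Icc]
    exact fun x hx =>
      (differentiableAt_id.rpow_const (Or.inl (hu.trans hx.1).ne')).neg.differentiableWithinAt
  · rw [interior_Icc]
    intro x hx
    rw [deriv.fun_neg, Real.deriv_rpow_const, show 1 - b - 1 = -b by ring, ← neg_mul, neg_sub]
    exact mul_le_mul_of_nonneg_left (rpow_le_rpow_of_nonpos (hu.trans hx.1) hx.2.le (by linarith))
      (by linarith)

theorem image_le_of_forall_frequently_slope_lt {F : ℝ → ℝ} {a c : ℝ}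
    (hF : ContinuousOn F (Icc a c))
    (hslope : ∀ x ∈ Ico a c, ∀ r > 0, ∃ᶠ z in 𝓝[>] x, slope F x z < r) :
    ∀ x ∈ Icc a c, F x ≤ F a :=
  image_le_of_liminf_slope_right_le_deriv_boundary hF le_rfl continuousOn_const
    (fun x _ => hasDerivWithinAt_const x _ _) hslope

section Comparison

variable {u : ℝ → ℝ} {a b x z : ℝ}

theorem slope_mul_log_add_rpow_le (ha : 0 ≤ a) (hb : 1 ≤ b) (hx : 0 < x) (hux : 0 < u x)
    (hxz : x < z) (hinc : a * u x ^ b * ((z - x) / z) ≤ u z - u x) :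
    slope (fun t => a * (b - 1) * log t + u t ^ (1 - b)) x z ≤
      a * (b - 1) * (slope log x z - u x ^ b * u z ^ (-b) / z) := by
  have hz : 0 < z := hx.trans hxz
  have huxz : u x ≤ u z := by
    have : 0 ≤ a * u x ^ b * ((z - x) / z) := by
      have := hxz.le; positivity
    linarith
  have htangent := sub_one_mul_rpow_neg_mul_sub_le hb hux huxz
  have hinc' : (b - 1) * u z ^ (-b) * (a * u x ^ b * ((z - x) / z)) ≤
      (b - 1) * u z ^ (-b) * (u z - u x) :=
    mul_le_mul_of_nonneg_left hinc (by have := hux.trans_le huxz; positivity)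
  have hzx : z - x ≠ 0 := sub_ne_zero.2 hxz.ne'
  have hexpand : a * (b - 1) * ((log z - log x) / (z - x) - u x ^ b * u z ^ (-b) / z) * (z - x) =
      a * (b - 1) * (log z - log x) - (b - 1) * u z ^ (-b) * (a * u x ^ b * ((z - x) / z)) := by
    field_simp
  rw [slope_def_field, slope_def_field, div_le_iff₀ (sub_pos.2 hxz), hexpand]
  linarith

theorem tendsto_slope_log_sub_rpow_div (hx : 0 < x) (hux : 0 < u x)
    (hu : Tendsto u (𝓝[>] x) (𝓝 (u x))) :
    Tendsto (fun z => slope log x z - u x ^ b * u z ^ (-b) / z) (𝓝[>] x) (𝓝 0) := by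
  have hlog : Tendsto (slope log x) (𝓝[>] x) (𝓝 x⁻¹) :=
    (hasDerivAt_iff_tendsto_slope.1 (hasDerivAt_log hx.ne')).mono_left
      (nhdsWithin_mono x fun z hz => ne_of_gt hz)
  have hratio : Tendsto (fun z => u x ^ b * u z ^ (-b) / z) (𝓝[>] x) (𝓝 x⁻¹) := by
    have h := ((hu.rpow_const (p := -b) (Or.inl hux.ne')).const_mul (u x ^ b)).div
      (tendsto_id.mono_left nhdsWithin_le_nhds) hx.ne'
    rwa [← rpow_add hux, add_neg_cancel, rpow_zero, one_div] at h
  simpa using hlog.sub hratio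

theorem mul_log_div_le_rpow_of_increment_ge {x₀ x₁ : ℝ}
    (ha : 0 ≤ a) (hb : 1 ≤ b) (hx₀ : 0 < x₀) (hx₀₁ : x₀ ≤ x₁) (hu₀ : 0 < u x₀)
    (hu : ContinuousOn u (Icc x₀ x₁))
    (hinc : ∀ x ∈ Icc x₀ x₁, ∀ z ∈ Ioc x x₁, a * u x ^ b * ((z - x) / z) ≤ u z - u x) :
    a * (b - 1) * log (x₁ / x₀) ≤ u x₀ ^ (1 - b) := by
  have hpos : ∀ x ∈ Icc x₀ x₁, 0 < u x := by
    intro x hx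
    rcases hx.1.eq_or_lt with rfl | hlt
    · exact hu₀
    have hinc₀ := hinc x₀ (left_mem_Icc.2 hx₀₁) x ⟨hlt, hx.2⟩
    have : 0 ≤ a * u x₀ ^ b * ((x - x₀) / x) := by
      have := hx₀.trans hlt; have := hlt.le; positivity
    linarith
  set F := fun t => a * (b - 1) * log t + u t ^ (1 - b) with hF
  have hFcont : ContinuousOn F (Icc x₀ x₁) :=
    ((continuousOn_log.mono fun t ht => (hx₀.trans_le ht.1).ne').const_mul _).add
      (hu.rpow_const fun t ht => Or.inl (hpos t ht).ne')
  have hslope : ∀ x ∈ Ico x₀ x₁, ∀ r > 0, ∃ᶠ z in 𝓝[>] x, slope F x z < r := by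
    intro x hx r hr
    have hxpos : 0 < x := hx₀.trans_le hx.1
    have hux : 0 < u x := hpos x (Ico_subset_Icc_self hx)
    have hright : Tendsto u (𝓝[>] x) (𝓝 (u x)) :=
      (hu x (Ico_subset_Icc_self hx)).mono_of_mem_nhdsWithin <|
        mem_of_superset (Ioo_mem_nhdsGT hx.2) fun z hz => ⟨hx.1.trans hz.1.le, hz.2.le⟩
    have hlim := (tendsto_slope_log_sub_rpow_div (b := b) hxpos hux hright).const_mul (a * (b - 1))
    rw [mul_zero] at hlim
    refine Eventually.frequently ?_
    filter_upwards [hlim.eventually (eventually_lt_nhds hr), Ioo_mem_nhdsGT hx.2] with z hz hzx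
    exact (slope_mul_log_add_rpow_le ha hb hxpos hux hzx.1
      (hinc x (Ico_subset_Icc_self hx) z ⟨hzx.1, hzx.2.le⟩)).trans_lt hz
  have hF₁ := image_le_of_forall_frequently_slope_lt hFcont hslope x₁ (right_mem_Icc.2 hx₀₁)
  rw [hF] at hF₁
  have hu₁ : 0 ≤ u x₁ ^ (1 - b) := rpow_nonneg (hpos x₁ (right_mem_Icc.2 hx₀₁)).le _
  rw [log_div (hx₀.trans_le hx₀₁).ne' hx₀.ne', mul_sub]
  linarith

end Comparison

section Primitive

variable {μ : Measure ℝ} {k : ℝ → ℝ} {a c x z : ℝ}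

theorem setIntegral_Ioc_sub_setIntegral_Ioc (hk : IntegrableOn k (Ioc a c) μ) (hax : a ≤ x)
    (hxz : x ≤ z) (hzc : z ≤ c) :
    ∫ s in Ioc a z, k s ∂μ - ∫ s in Ioc a x, k s ∂μ = ∫ s in Ioc x z, k s ∂μ := by
  rw [← Ioc_union_Ioc_eq_Ioc hax hxz, setIntegral_union (Ioc_disjoint_Ioc_of_le le_rfl)
    measurableSet_Ioc (hk.mono_set (Ioc_subset_Ioc le_rfl (hxz.trans hzc)))
    (hk.mono_set (Ioc_subset_Ioc hax hzc))]
  ring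

theorem monotoneOn_setIntegral_Ioc (hk₀ : ∀ s ∈ Ioc a c, 0 ≤ k s)
    (hk : IntegrableOn k (Ioc a c) μ) :
    MonotoneOn (fun t => ∫ s in Ioc a t, k s ∂μ) (Icc a c) := by
  intro x hx z hz hxz
  have hdiff := setIntegral_Ioc_sub_setIntegral_Ioc hk hx.1 hxz hz.2
  have : 0 ≤ ∫ s in Ioc x z, k s ∂μ := setIntegral_nonneg measurableSet_Ioc fun s hs =>
    hk₀ s ⟨hx.1.trans_lt hs.1, hs.2.trans hz.2⟩
  linarith

end Primitive

theorem mul_sub_div_le_setIntegral_Ioc_inv_mul {g : ℝ → ℝ} {c x z : ℝ} (hc : 0 ≤ c)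
    (hx : 0 < x) (hxz : x ≤ z)
    (hg : IntegrableOn (fun s => s ^ (-1 : ℝ) * g s) (Ioc x z))
    (hcg : ∀ᵐ s ∂volume.restrict (Ioc x z), c ≤ g s) :
    c * ((z - x) / z) ≤ ∫ s in Ioc x z, s ^ (-1 : ℝ) * g s := by
  have hbound : ∀ᵐ s ∂volume.restrict (Ioc x z), c / z ≤ s ^ (-1 : ℝ) * g s := by
    filter_upwards [ae_restrict_mem measurableSet_Ioc, hcg] with s hs hcs
    have hs₀ : 0 < s := hx.trans hs.1
    rw [rpow_neg_one, inv_mul_eq_div]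
    exact div_le_div₀ (hc.trans hcs) hcs hs₀ hs.2
  have hle := setIntegral_mono_ae_restrict
    (integrableOn_const (C := c / z) measure_Ioc_lt_top.ne) hg hbound
  rw [setIntegral_const, Real.volume_real_Ioc_of_le hxz, smul_eq_mul] at hle
  calc c * ((z - x) / z) = (z - x) * (c / z) := by ring
    _ ≤ _ := hle

theorem increment_ge_of_le_primitive {f u : ℝ → ℝ} {a₁ a₂ b t₀ t₁ : ℝ} (ha₁ : 0 ≤ a₁)
    (ha₂ : 0 ≤ a₂) (hb : 0 ≤ b) (ht₀ : 0 < t₀)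
    (hu : u = fun t => a₁ + a₂ * ∫ s in Ioc t₀ t, s ^ (-1 : ℝ) * f s ^ b)
    (hf : ∀ s ∈ Ioc t₀ t₁, 0 ≤ f s)
    (hint : IntegrableOn (fun s => s ^ (-1 : ℝ) * f s ^ b) (Ioc t₀ t₁))
    (hle : ∀ᵐ s ∂volume.restrict (Ioc t₀ t₁), u s ≤ f s) :
    ∀ x ∈ Icc t₀ t₁, ∀ z ∈ Ioc x t₁, a₂ * u x ^ b * ((z - x) / z) ≤ u z - u x := by
  intro x hx z hz
  have hmono : MonotoneOn u (Icc t₀ t₁) := by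
    intro p hp q hq hpq
    subst hu
    dsimp only
    gcongr a₁ + a₂ * ?_
    refine monotoneOn_setIntegral_Ioc (fun s hs => ?_) hint hp hq hpq
    exact mul_nonneg (rpow_nonneg (ht₀.trans hs.1).le _) (rpow_nonneg (hf s hs) _)
  have hux : 0 ≤ u x := by
    have : u t₀ = a₁ := by simp [hu]
    linarith [hmono (left_mem_Icc.2 (hx.1.trans hx.2)) hx hx.1]
  have hxz : Ioc x z ⊆ Ioc t₀ t₁ := Ioc_subset_Ioc hx.1 hz.2
  have hbound : u x ^ b * ((z - x) / z) ≤ ∫ s in Ioc x z, s ^ (-1 : ℝ) * f s ^ b := by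
    refine mul_sub_div_le_setIntegral_Ioc_inv_mul (rpow_nonneg hux _) (ht₀.trans_le hx.1)
      hz.1.le (hint.mono_set hxz) ?_
    filter_upwards [ae_restrict_mem measurableSet_Ioc, ae_restrict_of_ae_restrict_of_subset hxz hle]
      with s hs hus
    exact rpow_le_rpow hux ((hmono hx ⟨hx.1.trans hs.1.le, hs.2.trans hz.2⟩ hs.1.le).trans hus) hb
  have hdiff : u z - u x = a₂ * ∫ s in Ioc x z, s ^ (-1 : ℝ) * f s ^ b := by
    rw [hu, ← setIntegral_Ioc_sub_setIntegral_Ioc hint hx.1 hz.1.le hz.2]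
    ring
  rw [hdiff, mul_assoc]
  exact mul_le_mul_of_nonneg_left hbound ha₂

theorem le_rpow_mul_rpow_of_mul_le_rpow_neg {x A L p : ℝ} (hx : 0 < x) (hA : 0 < A) (hL : 0 < L)
    (hp : 0 < p) (h : A * L ≤ x ^ (-p)) : x ≤ A ^ (-1 / p) * L ^ (-1 / p) := by
  rwa [neg_div, ← div_neg, one_div, ← mul_rpow hA.le hL.le,
    le_rpow_inv_iff_of_neg hx (by positivity) (neg_lt_zero.2 hp)]

/-- ODE comparison lemma, logarithmic case `a = 1`. -/
theorem stmt_12 (b : ℝ) (hb : 1 < b) :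
    ∀ (T a₁ a₂ t₀ : ℝ) (f : ℝ → ℝ),
      0 < T → 0 < a₁ → 0 < a₂ → 0 < t₀ → t₀ < T / 2 →
      Measurable f → (∀ t ∈ Set.Ioo (0 : ℝ) T, 0 ≤ f t) →
      (∀ᵐ t ∂(volume.restrict (Set.Ioo t₀ T)),
        IntegrableOn (fun s => s ^ (-(1 : ℝ)) * f s ^ b) (Set.Ioc t₀ t) ∧
        a₁ + a₂ * ∫ s in Set.Ioc t₀ t, s ^ (-(1 : ℝ)) * f s ^ b ≤ f t) →
      a₁ ≤ (a₂ * (b - 1)) ^ (-(1 : ℝ) / (b - 1)) *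
        (Real.log (T / (2 * t₀))) ^ (-(1 : ℝ) / (b - 1)) := by
  intro T a₁ a₂ t₀ f hT ha₁ ha₂ ht₀ ht₀T _ hf hae
  obtain ⟨t₁, ht₁, hint, -⟩ := Measure.exists_mem_of_measure_ne_zero_of_ae
    (isOpen_Ioo.measure_ne_zero volume (nonempty_Ioo.2 (half_lt_self hT)))
    (ae_restrict_of_ae_restrict_of_subset (Ioo_subset_Ioo_left ht₀T.le) hae)
  have ht₀t₁ : t₀ < t₁ := ht₀T.trans ht₁.1
  have hsub : Ioc t₀ t₁ ⊆ Ioo t₀ T := Ioc_subset_Ioo_right ht₁.2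
  set u := fun t => a₁ + a₂ * ∫ s in Ioc t₀ t, s ^ (-1 : ℝ) * f s ^ b with hu
  have hinc := increment_ge_of_le_primitive ha₁.le ha₂.le (by linarith) ht₀ hu
    (fun s hs => hf s ⟨ht₀.trans (hsub hs).1, (hsub hs).2⟩) hint
    ((ae_restrict_of_ae_restrict_of_subset hsub hae).mono fun s hs => hs.2)
  have hcont : ContinuousOn u (Icc t₀ t₁) := continuousOn_const.add <| continuousOn_const.mul <|
    intervalIntegral.continuousOn_primitive (by rwa [integrableOn_Icc_iff_integrableOn_Ioc])
  have hu₀ : u t₀ = a₁ := by simp [hu]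
  have hlog := mul_log_div_le_rpow_of_increment_ge ha₂.le hb.le ht₀ ht₀t₁.le (hu₀ ▸ ha₁) hcont hinc
  have hL₀ : 0 < log (T / (2 * t₀)) := log_pos (by rw [lt_div_iff₀ (by positivity)]; linarith)
  have hL : log (T / (2 * t₀)) ≤ log (t₁ / t₀) := by
    refine log_le_log (by positivity) ?_
    rw [div_le_div_iff₀ (by positivity) ht₀]
    nlinarith [ht₁.1]
  refine le_rpow_mul_rpow_of_mul_le_rpow_neg ha₁ (by positivity) hL₀ (by linarith) ?_
  calc a₂ * (b - 1) * log (T / (2 * t₀)) ≤ a₂ * (b - 1) * log (t₁ / t₀) :=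
        mul_le_mul_of_nonneg_left hL (by nlinarith)
    _ ≤ a₁ ^ (-(b - 1)) := by rwa [neg_sub, ← hu₀]
end
end

section
/- Subordination kernel decay transfer: suppose φ : (0,∞) × (0,∞) → [0,∞) satisfies φ_t(s) ≤ C t s^{-1-α/2} for all s,t > 0 and ∫₀^∞ s^{-γ} φ_1(s) ds < ∞ for all γ > 0, with φ_t(s) = t^{-2/α} φ_1(s t^{-2/α}); and suppose h(η,t) ≤ C₂ t^{-Q/2} exp(−|η|²_{ℍ^N}/(c₂ t)). Then the subordinated kernel G(η,t) := ∫₀^∞ h(η,s) φ_t(s) ds satisfies G(η,t) ≤ C t^{-Q/α} (1 + |η|_{ℍ^N}/t^{1/α})^{-(Q+α)} for all η ∈ ℍ^N and t > 0. -/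
open MeasureTheory Set

noncomputable section

/-! Write `r = |η|`, `e = Q + α`. Two bounds on `G(η,t)` are combined. Dropping the Gaussian
factor, `h(η,s) ≤ C₂ s^{-Q/2}`, and the scaling of `φ` turns `∫ s^{-Q/2} φ_t(s) ds` into
`t^{-Q/α}` times the finite moment `∫ s^{-Q/2} φ₁(s) ds`. Keeping the Gaussian factor and using
`φ_t(s) ≤ Cφ t s^{-1-α/2}` instead, the substitution `s = r² x` gives `t r^{-e}` times the finite
integral `∫ x^{-e/2-1} exp(-1/(c₂x)) dx`. The first bound is the right one for `r ≤ t^{1/α}`, the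
second for `r ≥ t^{1/α}`, and together they give `t^{-Q/α} (1 + r/t^{1/α})^{-e}` up to the factor
`2^e`. -/

open Real
open scoped ENNReal

lemma lintegral_comp_mul_left_Ioi (f : ℝ → ℝ≥0∞) {c : ℝ} (hc : 0 < c) :
    ∫⁻ x in Ioi (0 : ℝ), f (c * x) = ENNReal.ofReal c⁻¹ * ∫⁻ x in Ioi (0 : ℝ), f x := by
  have hme : MeasurableEmbedding (fun x : ℝ => c * x) :=
    (Homeomorph.mulLeft₀ c hc.ne').measurableEmbedding
  have hpre : (c * ·) ⁻¹' (Ioi (0 : ℝ)) = Ioi 0 := by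
    ext x
    exact mul_pos_iff_of_pos_left hc
  calc ∫⁻ x in Ioi (0 : ℝ), f (c * x)
      = ∫⁻ y, f y ∂(Measure.map (c * ·) (volume.restrict (Ioi 0))) := by
        rw [hme.lintegral_map]
    _ = ∫⁻ y, f y ∂((Measure.map (c * ·) volume).restrict (Ioi 0)) := by
        rw [Measure.restrict_map hme.measurable measurableSet_Ioi, hpre]
    _ = ENNReal.ofReal c⁻¹ * ∫⁻ x in Ioi (0 : ℝ), f x := by
        rw [Real.map_volume_mul_left hc.ne', Measure.restrict_smul, lintegral_smul_measure,
          abs_of_pos (inv_pos.mpr hc), smul_eq_mul]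

lemma lintegral_rpow_neg_mul_comp_mul_left_Ioi (f : ℝ → ℝ) (β : ℝ) {c : ℝ} (hc : 0 < c) :
    ∫⁻ s in Ioi (0 : ℝ), ENNReal.ofReal (s ^ (-β) * f (c * s))
      = ENNReal.ofReal (c ^ (β - 1)) * ∫⁻ x in Ioi (0 : ℝ), ENNReal.ofReal (x ^ (-β) * f x) := by
  have hpoint : EqOn (fun s => ENNReal.ofReal (s ^ (-β) * f (c * s)))
      (fun s => ENNReal.ofReal (c ^ β) * ENNReal.ofReal ((c * s) ^ (-β) * f (c * s))) (Ioi 0) := by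
    intro s hs
    dsimp only
    rw [← ENNReal.ofReal_mul (rpow_nonneg hc.le _), mul_rpow hc.le (le_of_lt hs), ← mul_assoc,
      ← mul_assoc, ← rpow_add hc, add_neg_cancel, rpow_zero, one_mul]
  rw [setLIntegral_congr_fun measurableSet_Ioi hpoint,
    lintegral_const_mul' _ _ ENNReal.ofReal_ne_top,
    lintegral_comp_mul_left_Ioi (fun x => ENNReal.ofReal (x ^ (-β) * f x)) hc, ← mul_assoc,
    ← ENNReal.ofReal_mul (rpow_nonneg hc.le _), ← rpow_neg_one, ← rpow_add hc, sub_eq_add_neg]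

lemma integrableOn_rpow_neg_mul_exp_neg_inv {k c : ℝ} (hk : 0 < k) (hc : 0 < c) :
    IntegrableOn (fun x : ℝ => x ^ (-(k + 1)) * exp (-1 / (c * x))) (Ioi 0) := by
  -- `x ↦ x⁻¹` turns this into the Gamma-type integrand `y ^ (k - 1) * exp (-y / c)`.
  have hgamma := integrableOn_rpow_mul_exp_neg_mul_rpow (s := k - 1) (p := 1) (b := c⁻¹)
    (by linarith) one_pos (inv_pos.mpr hc)
  rw [← integrableOn_Ioi_comp_rpow_iff' _ (neg_ne_zero.mpr one_ne_zero)] at hgamma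
  refine hgamma.congr_fun (fun x hx => ?_) measurableSet_Ioi
  have hx : 0 < x := hx
  simp only [smul_eq_mul, rpow_one, rpow_neg_one]
  rw [inv_rpow hx.le, ← rpow_neg hx.le, ← mul_assoc, ← rpow_add hx]
  congr 2
  · ring
  · field_simp

lemma lintegral_rpow_neg_mul_eq_of_scaling {φ : ℝ → ℝ → ℝ} {κ β t : ℝ} (ht : 0 < t)
    (hscale : ∀ s, 0 < s → φ t s = t ^ (-κ) * φ 1 (s * t ^ (-κ))) :
    ∫⁻ s in Ioi (0 : ℝ), ENNReal.ofReal (s ^ (-β) * φ t s)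
      = ENNReal.ofReal (t ^ (-(κ * β))) *
          ∫⁻ s in Ioi (0 : ℝ), ENNReal.ofReal (s ^ (-β) * φ 1 s) := by
  set c := t ^ (-κ)
  have hc : 0 < c := rpow_pos_of_pos ht _
  have hpoint : EqOn (fun s => ENNReal.ofReal (s ^ (-β) * φ t s))
      (fun s => ENNReal.ofReal c * ENNReal.ofReal (s ^ (-β) * φ 1 (c * s))) (Ioi 0) := by
    intro s hs
    dsimp only
    rw [← ENNReal.ofReal_mul hc.le, hscale s hs, mul_comm s c]
    ring_nf
  rw [setLIntegral_congr_fun measurableSet_Ioi hpoint,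
    lintegral_const_mul' _ _ ENNReal.ofReal_ne_top,
    lintegral_rpow_neg_mul_comp_mul_left_Ioi (φ 1) β hc, ← mul_assoc,
    ← ENNReal.ofReal_mul hc.le, mul_comm c, ← rpow_add_one hc.ne', sub_add_cancel,
    ← rpow_mul ht.le, neg_mul]

lemma lintegral_mul_le_of_le_rpow_of_scaling {g : ℝ → ℝ} {φ : ℝ → ℝ → ℝ} {C κ β t : ℝ}
    (hC : 0 ≤ C) (ht : 0 < t) (hφ0 : ∀ s, 0 < s → 0 ≤ φ t s)
    (hscale : ∀ s, 0 < s → φ t s = t ^ (-κ) * φ 1 (s * t ^ (-κ)))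
    (hg : ∀ s, 0 < s → g s ≤ C * s ^ (-β)) :
    ∫⁻ s in Ioi (0 : ℝ), ENNReal.ofReal (g s * φ t s)
      ≤ ENNReal.ofReal (C * t ^ (-(κ * β))) *
          ∫⁻ s in Ioi (0 : ℝ), ENNReal.ofReal (s ^ (-β) * φ 1 s) :=
  calc ∫⁻ s in Ioi (0 : ℝ), ENNReal.ofReal (g s * φ t s)
      ≤ ∫⁻ s in Ioi (0 : ℝ), ENNReal.ofReal C * ENNReal.ofReal (s ^ (-β) * φ t s) := by
        refine setLIntegral_mono' measurableSet_Ioi fun s hs => ?_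
        rw [← ENNReal.ofReal_mul hC, ← mul_assoc]
        exact ENNReal.ofReal_le_ofReal (mul_le_mul_of_nonneg_right (hg s hs) (hφ0 s hs))
    _ = _ := by
        rw [lintegral_const_mul' _ _ ENNReal.ofReal_ne_top,
          lintegral_rpow_neg_mul_eq_of_scaling ht hscale, ← mul_assoc, ← ENNReal.ofReal_mul hC]

lemma lintegral_mul_le_of_le_gaussian {g ψ : ℝ → ℝ} {C D β γ a c : ℝ} (hC : 0 ≤ C) (hD : 0 ≤ D)
    (ha : 0 < a) (hψ0 : ∀ s, 0 < s → 0 ≤ ψ s) (hψ : ∀ s, 0 < s → ψ s ≤ D * s ^ (-(1 + γ)))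
    (hg : ∀ s, 0 < s → g s ≤ C * s ^ (-β) * exp (-a / (c * s))) :
    ∫⁻ s in Ioi (0 : ℝ), ENNReal.ofReal (g s * ψ s)
      ≤ ENNReal.ofReal (C * D * a ^ (-(β + γ))) *
          ∫⁻ x in Ioi (0 : ℝ), ENNReal.ofReal (x ^ (-(β + γ + 1)) * exp (-1 / (c * x))) :=
  calc ∫⁻ s in Ioi (0 : ℝ), ENNReal.ofReal (g s * ψ s)
      ≤ ∫⁻ s in Ioi (0 : ℝ), ENNReal.ofReal (C * D) *
          ENNReal.ofReal (s ^ (-(β + γ + 1)) * exp (-1 / (c * (a⁻¹ * s)))) := by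
        refine setLIntegral_mono' measurableSet_Ioi fun s (hs : 0 < s) => ?_
        rw [← ENNReal.ofReal_mul (mul_nonneg hC hD)]
        refine ENNReal.ofReal_le_ofReal ?_
        calc g s * ψ s ≤ (C * s ^ (-β) * exp (-a / (c * s))) * (D * s ^ (-(1 + γ))) :=
              mul_le_mul (hg s hs) (hψ s hs) (hψ0 s hs) (by positivity)
          _ = C * D * (s ^ (-β) * s ^ (-(1 + γ))) * exp (-a / (c * s)) := by ring
          _ = C * D * (s ^ (-(β + γ + 1)) * exp (-1 / (c * (a⁻¹ * s)))) := by
              rw [← rpow_add hs]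
              field_simp
              ring_nf
    _ = _ := by
        rw [lintegral_const_mul' _ _ ENNReal.ofReal_ne_top,
          lintegral_rpow_neg_mul_comp_mul_left_Ioi (fun x => exp (-1 / (c * x))) _ (inv_pos.mpr ha),
          ← mul_assoc, ← ENNReal.ofReal_mul (mul_nonneg hC hD), add_sub_cancel_right,
          inv_rpow ha.le, ← rpow_neg ha.le]

lemma one_le_two_rpow_mul_one_add_rpow_neg {x e : ℝ} (hx0 : 0 ≤ x) (hx1 : x ≤ 1) (he : 0 ≤ e) :
    1 ≤ 2 ^ e * (1 + x) ^ (-e) :=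
  calc (1 : ℝ) = 2 ^ e * 2 ^ (-e) := by rw [← rpow_add two_pos, add_neg_cancel, rpow_zero]
    _ ≤ 2 ^ e * (1 + x) ^ (-e) :=
        mul_le_mul_of_nonneg_left (rpow_le_rpow_of_nonpos (by linarith) (by linarith)
          (by linarith)) (by positivity)

lemma rpow_neg_le_two_rpow_mul_one_add_rpow_neg {x e : ℝ} (hx : 1 ≤ x) (he : 0 ≤ e) :
    x ^ (-e) ≤ 2 ^ e * (1 + x) ^ (-e) :=
  calc x ^ (-e) = 2 ^ e * (2 * x) ^ (-e) := by
        rw [mul_rpow zero_le_two (by linarith), ← mul_assoc, ← rpow_add two_pos, add_neg_cancel,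
          rpow_zero, one_mul]
    _ ≤ 2 ^ e * (1 + x) ^ (-e) :=
        mul_le_mul_of_nonneg_left (rpow_le_rpow_of_nonpos (by linarith) (by linarith)
          (by linarith)) (by positivity)

lemma mul_sq_rpow_neg_eq_rpow_mul_div_rpow_rpow_neg {t r Q α : ℝ} (ht : 0 < t) (hr : 0 ≤ r)
    (hα : α ≠ 0) :
    t * (r ^ 2) ^ (-(Q / 2 + α / 2)) = t ^ (-Q / α) * (r / t ^ (1 / α)) ^ (-(Q + α)) := by
  have hexp : -Q / α + -(1 / α * -(Q + α)) = 1 := by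
    field_simp
    ring
  rw [div_rpow hr (rpow_nonneg ht.le _), ← rpow_natCast, ← rpow_mul hr, ← rpow_mul ht.le,
    div_eq_mul_inv (r ^ _), ← rpow_neg ht.le, mul_left_comm, ← rpow_add ht, hexp, rpow_one,
    mul_comm]
  push_cast
  ring_nf

lemma le_ofReal_mul_rpow_mul_one_add_div_rpow_neg {X : ℝ≥0∞} {A B Q α t r : ℝ}
    (hA : 0 ≤ A) (hB : 0 ≤ B) (hα : 0 < α) (he : 0 ≤ Q + α) (ht : 0 < t) (hr : 0 ≤ r)
    (hnear : X ≤ ENNReal.ofReal (A * t ^ (-Q / α)))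
    (hfar : 0 < r → X ≤ ENNReal.ofReal (B * t * (r ^ 2) ^ (-(Q / 2 + α / 2)))) :
    X ≤ ENNReal.ofReal (2 ^ (Q + α) * (A + B) * t ^ (-Q / α) *
      (1 + r / t ^ (1 / α)) ^ (-(Q + α))) := by
  have hT : 0 < t ^ (1 / α) := rpow_pos_of_pos ht _
  have hx : 0 ≤ r / t ^ (1 / α) := div_nonneg hr hT.le
  have hABt : 0 ≤ (A + B) * t ^ (-Q / α) := mul_nonneg (add_nonneg hA hB) (rpow_nonneg ht.le _)
  rcases le_or_gt (r / t ^ (1 / α)) 1 with hx1 | hx1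
  · refine hnear.trans (ENNReal.ofReal_le_ofReal ?_)
    calc A * t ^ (-Q / α) ≤ (A + B) * t ^ (-Q / α) * 1 := by
          rw [mul_one]
          exact mul_le_mul_of_nonneg_right (by linarith) (rpow_nonneg ht.le _)
      _ ≤ (A + B) * t ^ (-Q / α) * (2 ^ (Q + α) * (1 + r / t ^ (1 / α)) ^ (-(Q + α))) :=
          mul_le_mul_of_nonneg_left (one_le_two_rpow_mul_one_add_rpow_neg hx hx1 he) hABt
      _ = _ := by ring
  · have hr0 : 0 < r := (div_pos_iff_of_pos_right hT).mp (one_pos.trans hx1)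
    refine (hfar hr0).trans (ENNReal.ofReal_le_ofReal ?_)
    rw [mul_assoc B, mul_sq_rpow_neg_eq_rpow_mul_div_rpow_rpow_neg ht hr hα.ne', ← mul_assoc]
    calc B * t ^ (-Q / α) * (r / t ^ (1 / α)) ^ (-(Q + α))
        ≤ (A + B) * t ^ (-Q / α) * (2 ^ (Q + α) * (1 + r / t ^ (1 / α)) ^ (-(Q + α))) :=
          mul_le_mul (mul_le_mul_of_nonneg_right (by linarith) (rpow_nonneg ht.le _))
            (rpow_neg_le_two_rpow_mul_one_add_rpow_neg hx1.le he) (rpow_nonneg hx _) hABt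
      _ = _ := by ring

lemma hnorm_nonneg {N : ℕ} (a : H N) : 0 ≤ hnorm a := by
  unfold hnorm
  positivity

theorem stmt_15_general (N : ℕ) (α Cφ C₂ c₂ : ℝ)
    (hα : 0 < α) (hCφ : 0 < Cφ) (hC₂ : 0 < C₂) (hc₂ : 0 < c₂)
    (φ : ℝ → ℝ → ℝ) (h : H N → ℝ → ℝ)
    (hφ0 : ∀ t s : ℝ, 0 < t → 0 < s → 0 ≤ φ t s)
    (hφub : ∀ t s : ℝ, 0 < t → 0 < s → φ t s ≤ Cφ * t * s ^ (-(1 + α / 2)))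
    (hφscale : ∀ t s : ℝ, 0 < t → 0 < s →
      φ t s = t ^ (-(2 / α)) * φ 1 (s * t ^ (-(2 / α))))
    (hφmom : ∀ γ : ℝ, 0 < γ →
      ∫⁻ s in Set.Ioi (0 : ℝ), ENNReal.ofReal (s ^ (-γ) * φ 1 s) < ⊤)
    (hhub : ∀ (η : H N) (t : ℝ), 0 < t →
      h η t ≤ C₂ * t ^ (-(2 * N + 2 : ℝ) / 2) *
        Real.exp (-(hnorm η) ^ 2 / (c₂ * t))) :
    ∃ C : ℝ, 0 < C ∧ ∀ (η : H N) (t : ℝ), 0 < t →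
      ∫⁻ s in Set.Ioi (0 : ℝ), ENNReal.ofReal (h η s * φ t s)
        ≤ ENNReal.ofReal (C * t ^ (-(2 * N + 2 : ℝ) / α) *
            (1 + hnorm η / t ^ (1 / α)) ^ (-((2 * N + 2 : ℝ) + α))) := by
  set Q : ℝ := 2 * N + 2
  set M := ∫⁻ s in Ioi (0 : ℝ), ENNReal.ofReal (s ^ (-(Q / 2)) * φ 1 s)
  set J := ∫⁻ x in Ioi (0 : ℝ), ENNReal.ofReal (x ^ (-(Q / 2 + α / 2 + 1)) * exp (-1 / (c₂ * x)))
  have hM : M < ⊤ := hφmom _ (by positivity)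
  have hJ : J < ⊤ :=
    (integrableOn_rpow_neg_mul_exp_neg_inv (k := Q / 2 + α / 2) (by positivity)
      hc₂).setLIntegral_lt_top
  set A := C₂ * M.toReal
  set B := C₂ * Cφ * J.toReal
  refine ⟨2 ^ (Q + α) * (A + B + 1), by positivity, fun η t ht => ?_⟩
  have hgauss (s : ℝ) (hs : 0 < s) :
      h η s ≤ C₂ * s ^ (-(Q / 2)) * exp (-(hnorm η ^ 2) / (c₂ * s)) := by
    rw [← neg_div]
    exact hhub η s hs
  have hpow (s : ℝ) (hs : 0 < s) : h η s ≤ C₂ * s ^ (-(Q / 2)) :=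
    (hgauss s hs).trans <| mul_le_of_le_one_right (by positivity) <|
      exp_le_one_iff.mpr (div_nonpos_of_nonpos_of_nonneg (by nlinarith) (by positivity))
  have hnear : ∫⁻ s in Ioi (0 : ℝ), ENNReal.ofReal (h η s * φ t s)
      ≤ ENNReal.ofReal (A * t ^ (-Q / α)) := by
    refine (lintegral_mul_le_of_le_rpow_of_scaling hC₂.le ht (hφ0 t · ht) (hφscale t · ht)
      hpow).trans_eq ?_
    change ENNReal.ofReal _ * M = _
    rw [← ENNReal.ofReal_toReal hM.ne, ← ENNReal.ofReal_mul (by positivity)]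
    congr 1
    field_simp
    ring
  have hfar (hr : 0 < hnorm η) : ∫⁻ s in Ioi (0 : ℝ), ENNReal.ofReal (h η s * φ t s)
      ≤ ENNReal.ofReal (B * t * (hnorm η ^ 2) ^ (-(Q / 2 + α / 2))) := by
    refine (lintegral_mul_le_of_le_gaussian hC₂.le (by positivity) (by positivity)
      (hφ0 t · ht) (hφub t · ht) hgauss).trans_eq ?_
    change ENNReal.ofReal _ * J = _
    rw [← ENNReal.ofReal_toReal hJ.ne, ← ENNReal.ofReal_mul (by positivity)]
    congr 1
    ring
  refine (le_ofReal_mul_rpow_mul_one_add_div_rpow_neg (by positivity) (by positivity) hα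
    (by positivity) ht (hnorm_nonneg η) hnear hfar).trans (ENNReal.ofReal_le_ofReal ?_)
  refine mul_le_mul_of_nonneg_right ?_ (by have := hnorm_nonneg η; positivity)
  gcongr 2 ^ (Q + α) * ?_ * _
  linarith

/-- Subordination transfers a Gaussian upper bound for `h` into an α-stable
upper bound for the subordinated kernel `G(η,t) = ∫₀^∞ h(η,s) φ_t(s) ds`. -/
theorem stmt_15 (N : ℕ) (hN : 1 ≤ N) (α Cφ C₂ c₂ : ℝ)
    (hα : 0 < α) (hα2 : α < 2) (hCφ : 0 < Cφ) (hC₂ : 0 < C₂) (hc₂ : 0 < c₂)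
    (φ : ℝ → ℝ → ℝ) (h : H N → ℝ → ℝ)
    (hφ0 : ∀ t s : ℝ, 0 < t → 0 < s → 0 ≤ φ t s)
    (hφub : ∀ t s : ℝ, 0 < t → 0 < s → φ t s ≤ Cφ * t * s ^ (-(1 + α / 2)))
    (hφscale : ∀ t s : ℝ, 0 < t → 0 < s →
      φ t s = t ^ (-(2 / α)) * φ 1 (s * t ^ (-(2 / α))))
    (hφmom : ∀ γ : ℝ, 0 < γ →
      ∫⁻ s in Set.Ioi (0 : ℝ), ENNReal.ofReal (s ^ (-γ) * φ 1 s) < ⊤)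
    (hh0 : ∀ (η : H N) (t : ℝ), 0 < t → 0 ≤ h η t)
    (hhub : ∀ (η : H N) (t : ℝ), 0 < t →
      h η t ≤ C₂ * t ^ (-(2 * N + 2 : ℝ) / 2) *
        Real.exp (-(hnorm η) ^ 2 / (c₂ * t))) :
    ∃ C : ℝ, 0 < C ∧ ∀ (η : H N) (t : ℝ), 0 < t →
      ∫⁻ s in Set.Ioi (0 : ℝ), ENNReal.ofReal (h η s * φ t s)
        ≤ ENNReal.ofReal (C * t ^ (-(2 * N + 2 : ℝ) / α) *
            (1 + hnorm η / t ^ (1 / α)) ^ (-((2 * N + 2 : ℝ) + α))) :=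
  stmt_15_general N α Cφ C₂ c₂ hα hCφ hC₂ hc₂ φ h hφ0 hφub hφscale hφmom hhub
end
end

section
/- Lower bound transfer by subordination: suppose φ_t(s) ≥ c t s^{-1-α/2} for all s ≥ t^{2/α} > 0, and h(η,t) ≥ C₁ t^{-Q/2} exp(−|η|²_{ℍ^N}/(c₁ t)). Then G(η,t) := ∫₀^∞ h(η,s) φ_t(s) ds satisfies G(η,t) ≥ c' t^{-Q/α} (1 + |η|_{ℍ^N}/t^{1/α})^{-(Q+α)} for all η ∈ ℍ^N and t > 0, for some constant c' > 0 depending only on Q, α, c, C₁, c₁. -/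
open MeasureTheory Set

noncomputable section

/-! Bound `∫₀^∞ h(η,s) φ_t(s) ds` below by its part over the window `A < s ≤ 2A`, `A = (t^{1/α} + |η|)²`.
There `s ≥ t^{2/α}`, so the lower bound for `φ_t` applies, and `s ≥ |η|²`, so the Gaussian factor
is at least `e^{-1/c₁}`; the power factors are at least `(2A)^{-Q/2}` and `t (2A)^{-1-α/2}`.
The window has length `A`, and `t A^{-(Q+α)/2} = t^{-Q/α} (1 + |η|/t^{1/α})^{-(Q+α)}`. -/

open Real

theorem ofReal_mul_sub_le_setLIntegral_Ioi_zero {f : ℝ → ℝ} {L a b : ℝ} (hL : 0 ≤ L)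
    (ha : 0 ≤ a) (hf : ∀ s ∈ Ioc a b, L ≤ f s) :
    ENNReal.ofReal (L * (b - a)) ≤ ∫⁻ s in Ioi 0, ENNReal.ofReal (f s) :=
  calc ENNReal.ofReal (L * (b - a))
      = ∫⁻ _ in Ioc a b, ENNReal.ofReal L := by
        rw [setLIntegral_const, Real.volume_Ioc, ENNReal.ofReal_mul hL]
    _ ≤ ∫⁻ s in Ioc a b, ENNReal.ofReal (f s) :=
        setLIntegral_mono' measurableSet_Ioc fun s hs => ENNReal.ofReal_le_ofReal (hf s hs)
    _ ≤ ∫⁻ s in Ioi 0, ENNReal.ofReal (f s) :=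
        lintegral_mono_set fun _ hs => ha.trans_lt hs.1

theorem exp_neg_inv_le_exp_neg_sq_div {c₁ r s : ℝ} (hc₁ : 0 < c₁) (hs : 0 < s) (hrs : r ^ 2 ≤ s) :
    exp (-(1 / c₁)) ≤ exp (-r ^ 2 / (c₁ * s)) := by
  rw [exp_le_exp, neg_div, neg_le_neg_iff, div_le_div_iff₀ (by positivity) hc₁]
  nlinarith

theorem rpow_neg_div_mul_one_add_div_rpow {Q α r t : ℝ} (hα : α ≠ 0) (hr : 0 ≤ r) (ht : 0 < t) :
    t ^ (-Q / α) * (1 + r / t ^ (1 / α)) ^ (-(Q + α)) = t * (t ^ (1 / α) + r) ^ (-(Q + α)) := by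
  have hu : 0 < t ^ (1 / α) := rpow_pos_of_pos ht _
  have hsum : 1 + r / t ^ (1 / α) = (t ^ (1 / α) + r) / t ^ (1 / α) := by field_simp
  have hpow : t ^ (-Q / α) * (t ^ (1 / α)) ^ (Q + α) = t := by
    rw [← rpow_mul ht.le, ← rpow_add ht]
    convert rpow_one t using 2
    field_simp
    ring
  rw [hsum, div_rpow (by positivity) hu.le, rpow_neg hu.le, div_inv_eq_mul]
  linear_combination (t ^ (1 / α) + r) ^ (-(Q + α)) * hpow

theorem two_mul_sq_rpow_mul_sq {B Q α : ℝ} (hB : 0 < B) :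
    (2 * B ^ 2) ^ (-Q / 2) * (2 * B ^ 2) ^ (-(1 + α / 2)) * B ^ 2
      = 2 ^ (-(Q + α + 2) / 2) * B ^ (-(Q + α)) := by
  have hB2 : (B ^ 2) ^ (-(Q + α + 2) / 2) * B ^ 2 = B ^ (-(Q + α)) := by
    rw [← rpow_natCast B 2, ← rpow_mul hB.le, ← rpow_add hB]
    congr 1
    push_cast
    ring
  rw [← rpow_add (by positivity), mul_rpow (by norm_num) (by positivity), mul_assoc, ← hB2]
  ring_nf

/-- The subordination lower bound for one kernel `g = h(η, ·)` with `r = |η|` and one subordinator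
density `φ = φ_t`. -/
theorem ofReal_le_lintegral_mul_of_gaussian_of_stable {Q α c C₁ c₁ r t : ℝ} {g φ : ℝ → ℝ}
    (hQ : 0 ≤ Q) (hα : 0 < α) (hc : 0 ≤ c) (hC₁ : 0 ≤ C₁) (hc₁ : 0 < c₁) (hr : 0 ≤ r)
    (ht : 0 < t) (hφ : ∀ s, t ^ (2 / α) ≤ s → c * t * s ^ (-(1 + α / 2)) ≤ φ s)
    (hg : ∀ s, 0 < s → C₁ * s ^ (-Q / 2) * exp (-r ^ 2 / (c₁ * s)) ≤ g s) :
    ENNReal.ofReal (c * C₁ * exp (-(1 / c₁)) * 2 ^ (-(Q + α + 2) / 2) * t ^ (-Q / α) *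
        (1 + r / t ^ (1 / α)) ^ (-(Q + α)))
      ≤ ∫⁻ s in Ioi 0, ENNReal.ofReal (g s * φ s) := by
  set B := t ^ (1 / α) + r with hB_def
  have hB : 0 < B := by positivity
  have htB : t ^ (2 / α) ≤ B ^ 2 := by
    rw [show 2 / α = 1 / α * (2 : ℕ) by ring, rpow_mul ht.le, rpow_natCast]
    gcongr
    exact le_add_of_nonneg_right hr
  have hrB : r ^ 2 ≤ B ^ 2 := by gcongr; exact le_add_of_nonneg_left (by positivity)
  have hwindow : ∀ s ∈ Ioc (B ^ 2) (2 * B ^ 2),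
      C₁ * (2 * B ^ 2) ^ (-Q / 2) * exp (-(1 / c₁)) * (c * t * (2 * B ^ 2) ^ (-(1 + α / 2)))
        ≤ g s * φ s := by
    rintro s ⟨hBs, hs2B⟩
    have hs : 0 < s := (by positivity : (0 : ℝ) < B ^ 2).trans hBs
    have hgs : C₁ * (2 * B ^ 2) ^ (-Q / 2) * exp (-(1 / c₁)) ≤ g s := by
      refine le_trans ?_ (hg s hs)
      refine mul_le_mul (mul_le_mul_of_nonneg_left ?_ hC₁) ?_ (exp_pos _).le (by positivity)
      · exact rpow_le_rpow_of_nonpos hs hs2B (by linarith)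
      · exact exp_neg_inv_le_exp_neg_sq_div hc₁ hs (hrB.trans hBs.le)
    have hφs : c * t * (2 * B ^ 2) ^ (-(1 + α / 2)) ≤ φ s := by
      refine le_trans ?_ (hφ s (htB.trans hBs.le))
      exact mul_le_mul_of_nonneg_left (rpow_le_rpow_of_nonpos hs hs2B (by linarith)) (by positivity)
    exact mul_le_mul hgs hφs (by positivity) ((by positivity : (0 : ℝ) ≤ _).trans hgs)
  calc _ = ENNReal.ofReal (C₁ * (2 * B ^ 2) ^ (-Q / 2) * exp (-(1 / c₁)) *
        (c * t * (2 * B ^ 2) ^ (-(1 + α / 2))) * (2 * B ^ 2 - B ^ 2)) := by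
        congr 1
        rw [mul_assoc _ (t ^ _), rpow_neg_div_mul_one_add_div_rpow hα.ne' hr ht, ← hB_def]
        linear_combination (-(c * C₁ * exp (-(1 / c₁)) * t)) * two_mul_sq_rpow_mul_sq (Q := Q) (α := α) hB
    _ ≤ _ := ofReal_mul_sub_le_setLIntegral_Ioi_zero (by positivity) (by positivity) hwindow

theorem stmt_16_general (N : ℕ) (α c C₁ c₁ : ℝ)
    (hα : 0 < α) (hc : 0 < c) (hC₁ : 0 < C₁) (hc₁ : 0 < c₁)
    (φ : ℝ → ℝ → ℝ) (h : H N → ℝ → ℝ)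
    (hφlb : ∀ t s : ℝ, 0 < t → t ^ (2 / α) ≤ s →
      c * t * s ^ (-(1 + α / 2)) ≤ φ t s)
    (hhlb : ∀ (η : H N) (t : ℝ), 0 < t →
      C₁ * t ^ (-(2 * N + 2 : ℝ) / 2) *
        Real.exp (-(hnorm η) ^ 2 / (c₁ * t)) ≤ h η t) :
    ∃ c' : ℝ, 0 < c' ∧ ∀ (η : H N) (t : ℝ), 0 < t →
      ENNReal.ofReal (c' * t ^ (-(2 * N + 2 : ℝ) / α) *
          (1 + hnorm η / t ^ (1 / α)) ^ (-((2 * N + 2 : ℝ) + α)))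
        ≤ ∫⁻ s in Set.Ioi (0 : ℝ), ENNReal.ofReal (h η s * φ t s) :=
  ⟨_, by positivity, fun η t ht =>
    ofReal_le_lintegral_mul_of_gaussian_of_stable (by positivity) hα hc.le hC₁.le hc₁
      (rpow_nonneg (by positivity) _) ht (hφlb t · ht) (hhlb η)⟩

/-- Subordination transfers a Gaussian lower bound for `h` into an α-stable
lower bound for the subordinated kernel `G(η,t) = ∫₀^∞ h(η,s) φ_t(s) ds`. -/
theorem stmt_16 (N : ℕ) (hN : 1 ≤ N) (α c C₁ c₁ : ℝ)
    (hα : 0 < α) (hα2 : α < 2) (hc : 0 < c) (hC₁ : 0 < C₁) (hc₁ : 0 < c₁)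
    (φ : ℝ → ℝ → ℝ) (h : H N → ℝ → ℝ)
    (hφ0 : ∀ t s : ℝ, 0 < t → 0 < s → 0 ≤ φ t s)
    (hφlb : ∀ t s : ℝ, 0 < t → t ^ (2 / α) ≤ s →
      c * t * s ^ (-(1 + α / 2)) ≤ φ t s)
    (hh0 : ∀ (η : H N) (t : ℝ), 0 < t → 0 ≤ h η t)
    (hhlb : ∀ (η : H N) (t : ℝ), 0 < t →
      C₁ * t ^ (-(2 * N + 2 : ℝ) / 2) *
        Real.exp (-(hnorm η) ^ 2 / (c₁ * t)) ≤ h η t) :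
    ∃ c' : ℝ, 0 < c' ∧ ∀ (η : H N) (t : ℝ), 0 < t →
      ENNReal.ofReal (c' * t ^ (-(2 * N + 2 : ℝ) / α) *
          (1 + hnorm η / t ^ (1 / α)) ^ (-((2 * N + 2 : ℝ) + α)))
        ≤ ∫⁻ s in Set.Ioi (0 : ℝ), ENNReal.ofReal (h η s * φ t s) :=
  stmt_16_general N α c C₁ c₁ hα hc hC₁ hc₁ φ h hφlb hhlb
end
end
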